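/- arXiv:2110.05825 — 2 statements merged into one kernel-verified Lean document; each statement's English description precedes it below -/
import Mathlib

section
/- Let 1 → Γ' → Γ → Γ'' be an exact sequence of groups (i.e., Γ' is a normal subgroup of Γ with quotient embedding in Γ''). Suppose that Γ'' has bounded finite subgroups, i.e., there is a constant B such that every finite subgroup of Γ'' has order at most B. Then Γ is Jordan if and only if Γ' is Jordan. -/
/-- A group is *Jordan* if there is a constant `J` such that every finite subgroup
contains a normal abelian subgroup of index at most `J`. -/
def IsJordanGroup (Γ : Type*) [Group Γ] : Prop :=
  ∃ J : ℕ, 0 < J ∧ ∀ G : Subgroup Γ, Finite G →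
    ∃ A : Subgroup G, A.Normal ∧ (∀ a b : A, a * b = b * a) ∧ A.index ≤ J

/-- A group has *bounded finite subgroups* if there is a constant `B` bounding
the order of every finite subgroup. -/
def HasBoundedFiniteSubgroups (Γ : Type*) [Group Γ] : Prop :=
  ∃ B : ℕ, ∀ G : Subgroup Γ, Finite G → Nat.card G ≤ B

/-- The index of the normal core is at most the factorial of the index. -/
lemma normalCore_index_le {G : Type*} [Group G] [Finite G] (H : Subgroup G) :
    H.normalCore.index ≤ Nat.factorial H.index := by
  classical
  have : Finite (G ⧸ H) := Quotient.finite _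
  have := Fintype.ofFinite (G ⧸ H)
  rw [Subgroup.normalCore_eq_ker, Subgroup.index_ker]
  calc Nat.card (MulAction.toPermHom G (G ⧸ H)).range
      ≤ Nat.card (Equiv.Perm (G ⧸ H)) :=
        Nat.card_le_card_of_injective _ Subtype.coe_injective
    _ = Nat.factorial H.index := by
        rw [Nat.card_eq_fintype_card, Fintype.card_perm, Subgroup.index_eq_card,
          Nat.card_eq_fintype_card]

/-- Jordan-ness transfers back along injective homomorphisms. -/
lemma isJordanGroup_of_injective {H G : Type*} [Group H] [Group G]
    (φ : H →* G) (hφ : Function.Injective φ) (hG : IsJordanGroup G) :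
    IsJordanGroup H := by
  obtain ⟨J, hJ, hJordan⟩ := hG
  refine ⟨J, hJ, fun G' hG' => ?_⟩
  let e : G' ≃* G'.map φ := G'.equivMapOfInjective φ hφ
  have hfin : Finite (G'.map φ) := Finite.of_equiv _ e.toEquiv
  obtain ⟨A, hAnorm, hAcomm, hAidx⟩ := hJordan (G'.map φ) hfin
  refine ⟨A.comap e.toMonoidHom, hAnorm.comap _, ?_, ?_⟩
  · rintro ⟨a, ha⟩ ⟨b, hb⟩
    have := hAcomm ⟨e a, ha⟩ ⟨e b, hb⟩
    have h2 : e a * e b = e b * e a := Subtype.ext_iff.mp this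
    have h3 : e (a * b) = e (b * a) := by rw [map_mul, map_mul, h2]
    have h4 : a * b = b * a := e.injective h3
    exact Subtype.ext h4
  · rw [Subgroup.index_comap_of_surjective _ e.surjective]
    exact hAidx

theorem commute_of_mem_map {Γ' Γ : Type*} [Group Γ'] [Group Γ]
    (f : Γ' →* Γ) (hf : Function.Injective f) (H : Subgroup Γ') (A : Subgroup H)
    (hAcomm : ∀ a b : A, a * b = b * a)
    {x y : Γ} (hx : x ∈ (A.map H.subtype).map f) (hy : y ∈ (A.map H.subtype).map f) :
    x * y = y * x := by
  obtain ⟨a, ha, rfl⟩ := hx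
  obtain ⟨b, hb, rfl⟩ := hy
  obtain ⟨a', ha', rfl⟩ := ha
  obtain ⟨b', hb', rfl⟩ := hb
  have := hAcomm ⟨a', ha'⟩ ⟨b', hb'⟩
  have h2 : a' * b' = b' * a' := Subtype.ext_iff.mp this
  rw [← map_mul, ← map_mul, ← map_mul, ← map_mul, h2]

/-- Lemma 2.1: given an exact sequence `1 → Γ' → Γ → Γ''` with `Γ''` having bounded
finite subgroups, `Γ` is Jordan iff `Γ'` is Jordan. -/
theorem stmt_0 {Γ' Γ Γ'' : Type*} [Group Γ'] [Group Γ] [Group Γ'']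
    (f : Γ' →* Γ) (g : Γ →* Γ'')
    (hf : Function.Injective f) (hexact : f.range = g.ker)
    (hbfs : HasBoundedFiniteSubgroups Γ'') :
    IsJordanGroup Γ ↔ IsJordanGroup Γ' := by
  obtain ⟨B, hB⟩ := hbfs
  constructor
  · exact isJordanGroup_of_injective f hf
  · rintro ⟨J, hJpos, hJordan⟩
    refine ⟨Nat.factorial (B * J), Nat.factorial_pos _, fun G hGfin => ?_⟩
    -- the preimage of G in Γ'
    set H : Subgroup Γ' := G.comap f with hH
    have hHfin : Finite H := by
      refine Finite.of_injective (fun x => (⟨f x, x.2⟩ : G)) ?_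
      intro x y hxy
      exact Subtype.ext (hf (Subtype.ext_iff.mp hxy))
    obtain ⟨A, hAnorm, hAcomm, hAidx⟩ := hJordan H hHfin
    -- N : kernel of g restricted to G
    set N : Subgroup G := (g.comp G.subtype).ker with hN
    have hNidx : N.index ≤ B := by
      rw [Subgroup.index_ker]
      have : Finite (g.comp G.subtype).range :=
        Finite.of_surjective _ (g.comp G.subtype).rangeRestrict_surjective
      exact hB _ this
    -- the image of A inside G
    set Abar : Subgroup G := ((A.map H.subtype).map f).subgroupOf G with hAbar
    have hmemG : ∀ x ∈ (A.map H.subtype).map f, x ∈ G := by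
      rintro x ⟨a, ha, rfl⟩
      obtain ⟨a', _, rfl⟩ := ha
      exact a'.2
    -- card Abar = card A
    have hcard1 : Nat.card Abar = Nat.card A := by
      have hle : (A.map H.subtype).map f ≤ G := hmemG
      have e1 := Subgroup.subgroupOfEquivOfLe hle
      have e2 := (A.map H.subtype).equivMapOfInjective f hf
      have e3 := A.equivMapOfInjective H.subtype H.subtype_injective
      rw [Nat.card_congr e1.toEquiv, ← Nat.card_congr e2.toEquiv, ← Nat.card_congr e3.toEquiv]
    -- card N = card H
    have hcard2 : Nat.card N = Nat.card H := by
      have h1 : N = (f.range ⊓ G).subgroupOf G := by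
        rw [Subgroup.inf_subgroupOf_right, hexact, hN, Subgroup.subgroupOf,
          MonoidHom.comap_ker]
      have h2 : H.map f = f.range ⊓ G := Subgroup.map_comap_eq f G
      have e1 := Subgroup.subgroupOfEquivOfLe (inf_le_right : f.range ⊓ G ≤ G)
      have e2 := H.equivMapOfInjective f hf
      rw [h1, Nat.card_congr e1.toEquiv, ← h2, ← Nat.card_congr e2.toEquiv]
    -- Abar.index = N.index * A.index
    have hApos : 0 < Nat.card A := Nat.card_pos
    have hkey : Abar.index * Nat.card A = N.index * A.index * Nat.card A := by
      calc Abar.index * Nat.card A = Nat.card G := by rw [← hcard1]; exact Abar.index_mul_card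
        _ = N.index * Nat.card N := N.index_mul_card.symm
        _ = N.index * (A.index * Nat.card A) := by rw [hcard2, A.index_mul_card]
        _ = N.index * A.index * Nat.card A := by ring
    have hAbaridx : Abar.index = N.index * A.index :=
      Nat.eq_of_mul_eq_mul_right hApos hkey
    have hAbaridx_le : Abar.index ≤ B * J := by
      rw [hAbaridx]
      exact Nat.mul_le_mul hNidx hAidx
    -- take the normal core
    refine ⟨Abar.normalCore, Subgroup.normalCore_normal _, ?_, ?_⟩
    · rintro ⟨a, ha⟩ ⟨b, hb⟩
      have ha' : (a : Γ) ∈ (A.map H.subtype).map f := Abar.normalCore_le ha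
      have hb' : (b : Γ) ∈ (A.map H.subtype).map f := Abar.normalCore_le hb
      have := commute_of_mem_map f hf H A hAcomm ha' hb'
      exact Subtype.ext (Subtype.ext this)
    · calc Abar.normalCore.index ≤ Nat.factorial Abar.index := normalCore_index_le _
        _ ≤ Nat.factorial (B * J) := Nat.factorial_le hAbaridx_le
end

section
/- Let 1 → Γ' → Γ → Γ'' be an exact sequence of groups. Suppose that Γ'' is strongly Jordan (Jordan and there is a constant r such that every finite subgroup of Γ'' is generated by at most r elements) and that Γ' has bounded finite subgroups. Then Γ is Jordan. -/
/-- A group is *strongly Jordan* if it is Jordan and there is a constant `r` such that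
every finite subgroup is generated by at most `r` elements. -/
def IsStronglyJordanGroup (Γ : Type*) [Group Γ] : Prop :=
  IsJordanGroup Γ ∧ ∃ r : ℕ, ∀ G : Subgroup Γ, Finite G →
    ∃ S : Finset Γ, S.card ≤ r ∧ Subgroup.closure (S : Set Γ) = G

open Subgroup
open scoped Nat

section FiniteGroupTheory

variable {G M : Type*} [Group G] [Group M]

theorem Subgroup.index_normalCore_le_factorial (H : Subgroup G) [H.FiniteIndex] :
    H.normalCore.index ≤ H.index ! := by
  have : Finite (G ⧸ H) := H.finite_quotient_of_finiteIndex
  refine Nat.le_of_dvd (Nat.factorial_pos _) ?_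
  rw [normalCore_eq_ker, index_ker, index_eq_card, ← Nat.card_perm]
  exact card_subgroup_dvd_card _

theorem card_commutatorSet_le_card_ker (ψ : G →* M) (hM : ∀ a b : M, a * b = b * a)
    [Finite ψ.ker] : Nat.card (commutatorSet G) ≤ Nat.card ψ.ker := by
  refine Nat.card_mono (ψ.ker : Set G).toFinite ?_
  rintro _ ⟨a, b, rfl⟩
  simp [MonoidHom.mem_ker, commutatorElement_def, hM (ψ a)]

theorem Group.rank_le_card_add_card_ker [Group.FG G] (ψ : G →* M) (hψ : Function.Surjective ψ)
    [Finite ψ.ker] (S : Finset M) (hS : closure (S : Set M) = ⊤) :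
    Group.rank G ≤ S.card + Nat.card ψ.ker := by
  classical
  set lifts := S.image (Function.surjInv hψ)
  set kerFinset := (ψ.ker : Set G).toFinite.toFinset
  have hlifts : map ψ (closure (lifts : Set G)) = ⊤ := by
    rw [MonoidHom.map_closure, Finset.coe_image, Set.image_image]
    simp only [Function.surjInv_eq, Set.image_id', hS]
  have hgen : closure ((lifts ∪ kerFinset : Finset G) : Set G) = ⊤ := by
    rw [Finset.coe_union, Subgroup.closure_union, Set.Finite.coe_toFinset, closure_eq,
      ← comap_map_eq, hlifts, comap_top]
  calc Group.rank G ≤ (lifts ∪ kerFinset).card := Group.rank_le hgen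
    _ ≤ lifts.card + kerFinset.card := Finset.card_union_le _ _
    _ ≤ S.card + Nat.card ψ.ker := by
      gcongr
      · exact Finset.card_image_le
      · rw [← Set.ncard_eq_toFinset_card _ (ψ.ker : Set G).toFinite, ← Nat.card_coe_set_eq]
        rfl

theorem index_center_le_card_ker_pow [Finite G] (ψ : G →* M) (hψ : Function.Surjective ψ)
    (hM : ∀ a b : M, a * b = b * a) (S : Finset M) (hS : closure (S : Set M) = ⊤) :
    (center G).index ≤ Nat.card ψ.ker ^ (S.card + Nat.card ψ.ker) :=
  calc (center G).index ≤ Nat.card (commutatorSet G) ^ Group.rank G := index_center_le_pow G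
    _ ≤ Nat.card ψ.ker ^ Group.rank G :=
      Nat.pow_le_pow_left (card_commutatorSet_le_card_ker ψ hM) _
    _ ≤ Nat.card ψ.ker ^ (S.card + Nat.card ψ.ker) :=
      Nat.pow_le_pow_right Nat.card_pos (Group.rank_le_card_add_card_ker ψ hψ S hS)

theorem mul_comm_of_le_map_center {H : Subgroup G} {N : Subgroup G}
    (hN : N ≤ (center H).map H.subtype) (a b : N) : a * b = b * a := by
  obtain ⟨z, hz, hza⟩ := hN a.2
  obtain ⟨w, -, hwb⟩ := hN b.2
  ext
  rw [coe_mul, coe_mul, ← hza, ← hwb]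
  exact congrArg Subtype.val (mem_center_iff.mp hz w).symm

end FiniteGroupTheory

section ExactSequence

variable {Γ' Γ Γ'' : Type*} [Group Γ'] [Group Γ] [Group Γ'']

theorem card_le_of_range_le_ker {f : Γ' →* Γ} {g : Γ →* Γ''} (hf : Function.Injective f)
    (hexact : f.range = g.ker) {B : ℕ} (hB : ∀ G : Subgroup Γ', Finite G → Nat.card G ≤ B)
    {P : Type*} [Group P] [Finite P] (ι : P →* Γ) (hι : Function.Injective ι)
    (hιg : ι.range ≤ g.ker) : Nat.card P ≤ B := by
  let lift : P →* Γ' := (MonoidHom.ofInjective hf).symm.toMonoidHom.comp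
    (ι.codRestrict f.range fun x => hexact ▸ hιg ⟨x, rfl⟩)
  have hlift : Function.Injective lift := by
    intro x y hxy
    apply hι
    simpa [lift] using congrArg f hxy
  have : Finite lift.range := Finite.of_surjective _ lift.rangeRestrict_surjective
  calc Nat.card P = Nat.card lift.range :=
        Nat.card_congr (MonoidHom.ofInjective hlift).toEquiv
    _ ≤ B := hB _ this

theorem exists_finset_card_le_closure_eq_top {r : ℕ}
    (hr : ∀ G : Subgroup Γ, Finite G →
      ∃ S : Finset Γ, S.card ≤ r ∧ closure (S : Set Γ) = G)
    {P : Type*} [Group P] [Finite P] (ι : P →* Γ) (hι : Function.Injective ι) :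
    ∃ S : Finset P, S.card ≤ r ∧ closure (S : Set P) = ⊤ := by
  have : Finite ι.range := Finite.of_surjective _ ι.rangeRestrict_surjective
  obtain ⟨S, hSr, hS⟩ := hr ι.range this
  obtain ⟨T, hT, hTtop⟩ := Group.rank_spec P
  refine ⟨T, ?_, hTtop⟩
  calc T.card = Group.rank P := hT
    _ = Group.rank ι.range := Group.rank_congr (MonoidHom.ofInjective hι)
    _ = Group.rank (closure (S : Set Γ)) := Subgroup.rank_congr hS.symm
    _ ≤ S.card := Subgroup.rank_closure_finset_le_card S
    _ ≤ r := hSr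

end ExactSequence

theorem exists_normal_comm_index_le_factorial {G Q : Type*} [Group G] [Group Q] [Finite G]
    (ρ : G →* Q) (hρ : Function.Surjective ρ) (A : Subgroup Q)
    (hA : ∀ a b : A, a * b = b * a)
    (S : Finset A) (hS : closure (S : Set A) = ⊤) {B r : ℕ} (hker : Nat.card ρ.ker ≤ B)
    (hSr : S.card ≤ r) :
    ∃ N : Subgroup G, N.Normal ∧ (∀ a b : N, a * b = b * a) ∧
      N.index ≤ (B ^ (r + B) * A.index)! := by
  set H := A.comap ρ
  set ψ : H →* A := ρ.subgroupComap A
  have hψ : Function.Surjective ψ := ρ.subgroupComap_surjective_of_surjective A hρ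
  have hkerψ : Nat.card ψ.ker ≤ B := by
    refine le_trans ?_ hker
    rw [← card_map_of_injective H.subtype_injective]
    refine card_le_of_le ?_
    rintro _ ⟨x, hx, rfl⟩
    exact congrArg Subtype.val hx
  have hcenter : ((center H).map H.subtype).index ≤ B ^ (r + B) * A.index := by
    rw [index_map_subtype, index_comap_of_surjective A hρ]
    gcongr
    calc (center H).index ≤ Nat.card ψ.ker ^ (S.card + Nat.card ψ.ker) :=
          index_center_le_card_ker_pow ψ hψ hA S hS
      _ ≤ B ^ (r + B) := Nat.pow_le_pow_left hkerψ _ |>.trans <|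
          Nat.pow_le_pow_right (Nat.card_pos.trans_le hkerψ) (by omega)
  exact ⟨_, normalCore_normal _, mul_comm_of_le_map_center (normalCore_le _),
    (index_normalCore_le_factorial _).trans (Nat.factorial_le hcenter)⟩

/-- Lemma 2.2: given an exact sequence `1 → Γ' → Γ → Γ''` with `Γ''` strongly Jordan
and `Γ'` having bounded finite subgroups, the group `Γ` is Jordan. -/
theorem stmt_1 {Γ' Γ Γ'' : Type*} [Group Γ'] [Group Γ] [Group Γ'']
    (f : Γ' →* Γ) (g : Γ →* Γ'')
    (hf : Function.Injective f) (hexact : f.range = g.ker)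
    (hsj : IsStronglyJordanGroup Γ'')
    (hbfs : HasBoundedFiniteSubgroups Γ') :
    IsJordanGroup Γ := by
  obtain ⟨⟨J, -, hJordan⟩, r, hr⟩ := hsj
  obtain ⟨B, hB⟩ := hbfs
  refine ⟨(B ^ (r + B) * J)!, Nat.factorial_pos _, fun G hG => ?_⟩
  set ρ := (g.comp G.subtype).rangeRestrict
  have hρ : Function.Surjective ρ := MonoidHom.rangeRestrict_surjective _
  have : Finite (g.comp G.subtype).range := Finite.of_surjective ρ hρ
  obtain ⟨A, -, hAcomm, hAJ⟩ := hJordan _ this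
  obtain ⟨S, hSr, hS⟩ := exists_finset_card_le_closure_eq_top hr
    ((g.comp G.subtype).range.subtype.comp A.subtype) (by simp [Subtype.val_injective])
  have hker : Nat.card ρ.ker ≤ B := by
    refine card_le_of_range_le_ker hf hexact hB (G.subtype.comp ρ.ker.subtype) (by simp) ?_
    rintro _ ⟨x, rfl⟩
    simpa [ρ, MonoidHom.ker_rangeRestrict] using x.2
  obtain ⟨N, hN, hNcomm, hNidx⟩ :=
    exists_normal_comm_index_le_factorial ρ hρ A hAcomm S hS hker hSr
  exact ⟨N, hN, hNcomm, hNidx.trans (Nat.factorial_le (Nat.mul_le_mul_left _ hAJ))⟩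
end
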